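/- arXiv:2312.00014 — 2 statements merged into one kernel-verified Lean document; each statement's English description precedes it below -/
import Mathlib

section
/- For \(\alpha \in [0,1)\), \(\beta>0\), \(p>0\), a positive \(C^1\) weight \(\omega\) on \([a,b]\), and \(g \in H^1(a,b)\), the power fractional derivative admits the series representation \({}^{p,C}D_{a,t,\omega}^{\alpha,\beta,p} g(t) = \frac{1}{\phi(\alpha)} \sum_{n=0}^{\infty} (-\mu_\alpha \ln p)^n \, {}^{RL}I_{a,\omega}^{\beta n + 1}\Big( \frac{(\omega g)'}{\omega} \Big)(t)\), where the series converges locally uniformly in \(t\). -/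
open Real MeasureTheory Set Filter
open Topology

/-- Real power Mittag–Leffler function `ᵖE_{k,l}(s) = ∑ (s ln p)^n / Γ(k n + l)`. -/
noncomputable def powML (p k l s : ℝ) : ℝ :=
  ∑' n : ℕ, (s * Real.log p) ^ n / Real.Gamma (k * n + l)

/-- Weighted Riemann–Liouville fractional integral of order `β`. -/
noncomputable def RLint (a β : ℝ) (ω g : ℝ → ℝ) (t : ℝ) : ℝ :=
  (1 / (Real.Gamma β * ω t)) * ∫ s in a..t, (t - s) ^ (β - 1) * (ω s * g s)

/-- Power fractional derivative (Caputo sense) with weight `ω` and normalization `Nf`. -/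
noncomputable def PFD (a α β p : ℝ) (Nf ω g : ℝ → ℝ) (t : ℝ) : ℝ :=
  (Nf α / (1 - α)) * (1 / ω t) *
    ∫ s in a..t, powML p β 1 (-(α / (1 - α)) * (t - s) ^ β) * deriv (fun x => ω x * g x) s

/-- Power fractional integral with weight `ω` and normalization `Nf`. -/
noncomputable def PFI (a α β p : ℝ) (Nf ω g : ℝ → ℝ) (t : ℝ) : ℝ :=
  ((1 - α) / Nf α) * g t + Real.log p * (α / Nf α) * RLint a β ω g t

set_option maxHeartbeats 1600000 in
lemma summable_ml {β : ℝ} (hβ : 0 < β) (r : ℝ) (hr : 0 ≤ r) :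
    Summable (fun n : ℕ => r ^ n / Real.Gamma (β * n + 1)) := by
  set R : ℝ := max 1 ((2 * r) ^ (1 / β)) with hRdef
  have hR1 : (1:ℝ) ≤ R := le_max_left _ _
  have hR0 : (0:ℝ) < R := lt_of_lt_of_le one_pos hR1
  have hRb : 2 * r ≤ R ^ β := by
    have h1 : (2*r) ^ (1/β) ≤ R := le_max_right _ _
    have h2 : ((2*r) ^ (1/β)) ^ β ≤ R ^ β :=
      Real.rpow_le_rpow (Real.rpow_nonneg (by linarith) _) h1 hβ.le
    calc 2 * r = (2*r) ^ ((1/β) * β) := by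
          rw [one_div_mul_cancel hβ.ne', Real.rpow_one]
      _ = ((2*r) ^ (1/β)) ^ β := Real.rpow_mul (by linarith) _ _
      _ ≤ R ^ β := h2
  have hRβpos : (0:ℝ) < R ^ β := Real.rpow_pos_of_pos hR0 _
  set q : ℝ := r / R ^ β with hqdef
  have hq0 : 0 ≤ q := div_nonneg hr hRβpos.le
  have hq1 : q < 1 := by
    rw [hqdef, div_lt_one hRβpos]; nlinarith
  set C : ℝ := Real.exp R * R with hCdef
  -- main pointwise bound for n with 1 ≤ β * n
  have claim : ∀ n : ℕ, (1:ℝ) ≤ β * n → r ^ n / Real.Gamma (β * n + 1) ≤ C * q ^ n := by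
    intro n hn
    set m : ℕ := ⌊β * (n:ℝ)⌋₊ with hmdef
    have hβn0 : (0:ℝ) ≤ β * n := by linarith
    have hm1 : (1:ℕ) ≤ m := Nat.le_floor (by exact_mod_cast hn)
    have hmle : (m:ℝ) ≤ β * n := Nat.floor_le hβn0
    have hlem : β * n - 1 ≤ (m:ℝ) := by
      have := Nat.lt_floor_add_one (β * (n:ℝ)); linarith
    have hGam : R ^ (β * (n:ℝ) - 1) * Real.exp (-R) ≤ Real.Gamma (β * n + 1) := by
      have h1 : R ^ (β * (n:ℝ) - 1) ≤ R ^ (m:ℝ) :=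
        Real.rpow_le_rpow_of_exponent_le hR1 hlem
      have h2 : R ^ (m:ℝ) = R ^ m := Real.rpow_natCast R m
      have h3 : R ^ m * Real.exp (-R) ≤ (m.factorial : ℝ) := by
        have h4 := Real.pow_div_factorial_le_exp R (le_of_lt hR0) m
        have h5 : (0:ℝ) < m.factorial := by exact_mod_cast m.factorial_pos
        rw [div_le_iff₀ h5] at h4
        rw [Real.exp_neg]
        rw [mul_inv_le_iff₀ (Real.exp_pos R)]
        linarith [h4]
      have h6 : (m.factorial : ℝ) = Real.Gamma (m + 1) := (Real.Gamma_nat_eq_factorial m).symm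
      have h7 : Real.Gamma ((m:ℝ) + 1) ≤ Real.Gamma (β * n + 1) := by
        have hm2 : (2:ℝ) ≤ (m:ℝ) + 1 := by
          have h1m : (1:ℝ) ≤ (m:ℝ) := by exact_mod_cast hm1
          linarith
        rcases eq_or_lt_of_le (by linarith : ((m:ℝ) + 1) ≤ β * n + 1) with h | h
        · rw [h]
        · exact le_of_lt (Real.Gamma_strictMonoOn_Ici (mem_Ici.mpr hm2)
            (mem_Ici.mpr (by linarith : (2:ℝ) ≤ β * ↑n + 1)) h)
      calc R ^ (β * (n:ℝ) - 1) * Real.exp (-R) ≤ R ^ (m:ℝ) * Real.exp (-R) := by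
            apply mul_le_mul_of_nonneg_right h1 (Real.exp_pos _).le
        _ = R ^ m * Real.exp (-R) := by rw [h2]
        _ ≤ (m.factorial : ℝ) := h3
        _ = Real.Gamma ((m:ℝ) + 1) := h6
        _ ≤ Real.Gamma (β * n + 1) := h7
    have hDpos : 0 < R ^ (β * (n:ℝ) - 1) * Real.exp (-R) :=
      mul_pos (Real.rpow_pos_of_pos hR0 _) (Real.exp_pos _)
    have step1 : r ^ n / Real.Gamma (β * n + 1) ≤ r ^ n / (R ^ (β * (n:ℝ) - 1) * Real.exp (-R)) :=
      div_le_div_of_nonneg_left (pow_nonneg hr n) hDpos hGam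
    have step2 : r ^ n / (R ^ (β * (n:ℝ) - 1) * Real.exp (-R)) = C * q ^ n := by
      have e1 : R ^ (β * (n:ℝ) - 1) = R ^ (β * (n:ℝ)) / R := by
        rw [Real.rpow_sub hR0, Real.rpow_one]
      have e2 : R ^ (β * (n:ℝ)) = (R ^ β) ^ n := by
        rw [Real.rpow_mul hR0.le, Real.rpow_natCast]
      rw [e1, e2, hqdef, hCdef, Real.exp_neg, div_pow]
      field_simp
    calc r ^ n / Real.Gamma (β * n + 1)
        ≤ r ^ n / (R ^ (β * (n:ℝ) - 1) * Real.exp (-R)) := step1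
      _ = C * q ^ n := step2
  -- shift index so that 1 ≤ β * n
  set n₀ : ℕ := ⌈1 / β⌉₊ with hn₀
  rw [← summable_nat_add_iff n₀]
  have hgeo : Summable (fun n : ℕ => C * q ^ (n + n₀)) :=
    (summable_nat_add_iff n₀).2 ((summable_geometric_of_lt_one hq0 hq1).mul_left C)
  apply Summable.of_nonneg_of_le (fun n => div_nonneg (pow_nonneg hr _)
    (Real.Gamma_pos_of_pos (by positivity)).le) (fun n => ?_) hgeo
  apply claim
  have h1 : (1/β : ℝ) ≤ (n₀ : ℝ) := Nat.le_ceil _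
  have h2 : (n₀ : ℝ) ≤ ((n + n₀ : ℕ) : ℝ) := by exact_mod_cast Nat.le_add_left _ _
  calc (1:ℝ) = β * (1/β) := by field_simp
    _ ≤ β * ((n + n₀ : ℕ) : ℝ) := by
        apply mul_le_mul_of_nonneg_left (le_trans h1 h2) hβ.le

set_option maxHeartbeats 1600000 in
/-- series representation of the power fractional derivative as an
infinite series of weighted Riemann–Liouville integrals, with locally uniform
convergence in `t`. -/
theorem PFD_series_representation (a b α β p : ℝ) (Nf ω g : ℝ → ℝ)
    (hab : a < b) (hα : α ∈ Set.Ico (0 : ℝ) 1) (hβ : 0 < β) (hp : 0 < p)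
    (hN : 0 < Nf α)
    (hω : ContDiffOn ℝ 1 ω (Set.Icc a b)) (hωpos : ∀ t ∈ Set.Icc a b, 0 < ω t)
    (hg : ∀ t ∈ Set.Icc a b, DifferentiableAt ℝ g t)
    (hg' : ContinuousOn (deriv g) (Set.Icc a b)) :
    (∀ t ∈ Set.Icc a b,
      PFD a α β p Nf ω g t =
        (Nf α / (1 - α)) * ∑' n : ℕ, (-(α / (1 - α)) * Real.log p) ^ n *
          RLint a (β * n + 1) ω (fun x => deriv (fun y => ω y * g y) x / ω x) t) ∧
    TendstoLocallyUniformlyOn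
      (fun (N : ℕ) (t : ℝ) => (Nf α / (1 - α)) * ∑ n ∈ Finset.range N,
        (-(α / (1 - α)) * Real.log p) ^ n *
          RLint a (β * n + 1) ω (fun x => deriv (fun y => ω y * g y) x / ω x) t)
      (fun t => PFD a α β p Nf ω g t) atTop (Set.Icc a b) := by
  obtain ⟨hα0, hα1⟩ := hα
  have h1α : (0:ℝ) < 1 - α := by linarith
  have hba : (0:ℝ) < b - a := by linarith
  set c : ℝ := -(α / (1 - α)) * Real.log p with hc
  set f : ℝ → ℝ := deriv (fun x => ω x * g x) with hfdef
  have hfm : Measurable f := measurable_deriv _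
  -- bound B on f over Ioo a b
  obtain ⟨B, hB0, hBf⟩ : ∃ B : ℝ, 0 ≤ B ∧ ∀ s ∈ Ioo a b, |f s| ≤ B := by
    have hgc : ContinuousOn g (Icc a b) := fun s hs => ((hg s hs).continuousAt).continuousWithinAt
    have hderivω : ContinuousOn (derivWithin ω (Icc a b)) (Icc a b) :=
      hω.continuousOn_derivWithin (uniqueDiffOn_Icc hab) le_rfl
    have hcont : ContinuousOn
        (fun s => derivWithin ω (Icc a b) s * g s + ω s * deriv g s) (Icc a b) :=
      (hderivω.mul hgc).add (hω.continuousOn.mul hg')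
    obtain ⟨C, hC⟩ := isCompact_Icc.exists_bound_of_continuousOn hcont
    refine ⟨max C 0, le_max_right _ _, fun s hs => ?_⟩
    have hsIcc : s ∈ Icc a b := ⟨hs.1.le, hs.2.le⟩
    have hnhds : Icc a b ∈ 𝓝 s := Icc_mem_nhds hs.1 hs.2
    have hωd : DifferentiableAt ℝ ω s :=
      ((hω.differentiableOn one_ne_zero) s hsIcc).differentiableAt hnhds
    have hfs : f s = derivWithin ω (Icc a b) s * g s + ω s * deriv g s := by
      rw [hfdef, deriv_fun_mul hωd (hg s hsIcc), derivWithin_of_mem_nhds hnhds]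
    rw [hfs]
    exact le_max_of_le_left (by simpa using hC s hsIcc)
  -- lower bound m of ω
  obtain ⟨s₀, hs₀, hmin⟩ :=
    isCompact_Icc.exists_isMinOn (nonempty_Icc.mpr hab.le) hω.continuousOn
  set m : ℝ := ω s₀ with hmdef
  have hm0 : 0 < m := hωpos s₀ hs₀
  have hGpos : ∀ n : ℕ, 0 < Real.Gamma (β * n + 1) := fun n =>
    Real.Gamma_pos_of_pos (by positivity)
  set I : ℕ → ℝ → ℝ := fun n t => ∫ s in Ioo a t, (t - s) ^ (β * (n:ℝ)) * f s with hI
  -- RLint in terms of I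
  have hRL : ∀ t ∈ Icc a b, ∀ n : ℕ,
      RLint a (β * n + 1) ω (fun x => f x / ω x) t
        = (1 / (Real.Gamma (β * n + 1) * ω t)) * I n t := by
    intro t ht n
    rw [RLint]
    congr 1
    rw [intervalIntegral.integral_of_le ht.1, integral_Ioc_eq_integral_Ioo]
    refine setIntegral_congr_fun measurableSet_Ioo (fun s hs => ?_)
    have hsIcc : s ∈ Icc a b := ⟨hs.1.le, hs.2.le.trans ht.2⟩
    have hωs : ω s ≠ 0 := (hωpos s hsIcc).ne'
    have he : β * (n:ℝ) + 1 - 1 = β * (n:ℝ) := by ring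
    rw [he, mul_comm (ω s), div_mul_cancel₀ _ hωs]
  -- a.e. bound on the integrand of I
  have hae : ∀ t ∈ Icc a b, ∀ n : ℕ, ∀ᵐ s ∂(volume.restrict (Ioo a t)),
      ‖(t - s) ^ (β * (n:ℝ)) * f s‖ ≤ (b - a) ^ (β * (n:ℝ)) * B := by
    intro t ht n
    refine (ae_restrict_mem measurableSet_Ioo).mono (fun s hs => ?_)
    have hs' : s ∈ Ioo a b := ⟨hs.1, lt_of_lt_of_le hs.2 ht.2⟩
    have hts : (0:ℝ) ≤ t - s := by linarith [hs.2.le]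
    rw [norm_mul, Real.norm_eq_abs, Real.norm_eq_abs,
      abs_of_nonneg (Real.rpow_nonneg hts _)]
    have h1 : (t - s) ^ (β * (n:ℝ)) ≤ (b - a) ^ (β * (n:ℝ)) :=
      Real.rpow_le_rpow hts (by linarith [ht.2, hs.1]) (by positivity)
    exact mul_le_mul h1 (hBf s hs') (abs_nonneg _) (Real.rpow_nonneg hba.le _)
  have hvol : ∀ t : ℝ, volume (Ioo a t) < ⊤ := fun t => by
    rw [Real.volume_Ioo]; exact ENNReal.ofReal_lt_top
  have hvolle : ∀ t ∈ Icc a b, (volume (Ioo a t)).toReal ≤ b - a := by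
    intro t ht
    rw [Real.volume_Ioo, ENNReal.toReal_ofReal (by linarith [ht.1] : (0:ℝ) ≤ t - a)]
    linarith [ht.2]
  -- integrability
  have hFint : ∀ t ∈ Icc a b, ∀ n : ℕ,
      Integrable (fun s => (t - s) ^ (β * (n:ℝ)) * f s) (volume.restrict (Ioo a t)) := by
    intro t ht n
    have hmeas : Measurable fun s => (t - s) ^ (β * (n:ℝ)) * f s :=
      (((Real.continuous_rpow_const (by positivity)).comp
        (continuous_const.sub continuous_id)).measurable).mul hfm
    exact Integrable.mono' (integrableOn_const (hvol t).ne enorm_ne_top)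
      hmeas.aestronglyMeasurable (hae t ht n)
  -- bound on I
  have hIb : ∀ t ∈ Icc a b, ∀ n : ℕ,
      ‖I n t‖ ≤ ((b - a) ^ (β * (n:ℝ)) * B) * (b - a) := by
    intro t ht n
    calc ‖I n t‖ ≤ ((b - a) ^ (β * (n:ℝ)) * B) * (volume (Ioo a t)).toReal :=
          norm_setIntegral_le_of_norm_le_const_ae (hvol t) (hae t ht n)
      _ ≤ ((b - a) ^ (β * (n:ℝ)) * B) * (b - a) := by
          apply mul_le_mul_of_nonneg_left (hvolle t ht)
          exact mul_nonneg (Real.rpow_nonneg hba.le _) hB0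
  -- rewrite of powers
  have hpow : ∀ (x : ℝ), 0 ≤ x → ∀ n : ℕ, (x ^ β) ^ n = x ^ (β * (n:ℝ)) := by
    intro x hx n
    rw [Real.rpow_mul hx, Real.rpow_natCast]
  -- summable majorant (generic form)
  have hmaj : ∀ K : ℝ, Summable (fun n : ℕ =>
      (|c| ^ n / Real.Gamma (β * n + 1)) * (((b - a) ^ (β * (n:ℝ)) * B) * K)) := by
    intro K
    have h1 : Summable (fun n : ℕ =>
        ((|c| * (b - a) ^ β) ^ n / Real.Gamma (β * n + 1)) * (B * K)) :=
      (summable_ml hβ (|c| * (b - a) ^ β) (by positivity)).mul_right _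
    refine h1.congr (fun n => ?_)
    rw [mul_pow, hpow (b - a) hba.le n]
    ring
  -- the HasSum (series interchange)
  have hseries : ∀ t ∈ Icc a b,
      HasSum (fun n : ℕ => (c ^ n / Real.Gamma (β * n + 1)) * I n t)
        (∫ s in Ioo a t, powML p β 1 (-(α / (1 - α)) * (t - s) ^ β) * f s) := by
    intro t ht
    have hint : ∀ n : ℕ, Integrable
        (fun s => (c ^ n / Real.Gamma (β * n + 1)) * ((t - s) ^ (β * (n:ℝ)) * f s))
        (volume.restrict (Ioo a t)) := fun n => (hFint t ht n).const_mul _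
    have hsumnorm : Summable (fun n : ℕ => ∫ s in Ioo a t,
        ‖(c ^ n / Real.Gamma (β * n + 1)) * ((t - s) ^ (β * (n:ℝ)) * f s)‖) := by
      refine Summable.of_nonneg_of_le
        (fun n => integral_nonneg (fun s => norm_nonneg _)) (fun n => ?_) (hmaj (b - a))
      have h2 : ∀ᵐ s ∂(volume.restrict (Ioo a t)),
          ‖‖(c ^ n / Real.Gamma (β * n + 1)) * ((t - s) ^ (β * (n:ℝ)) * f s)‖‖ ≤
            (|c| ^ n / Real.Gamma (β * n + 1)) * ((b - a) ^ (β * (n:ℝ)) * B) := by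
        refine (hae t ht n).mono (fun s hs => ?_)
        rw [norm_norm, norm_mul]
        have h3 : ‖c ^ n / Real.Gamma (β * n + 1)‖ = |c| ^ n / Real.Gamma (β * n + 1) := by
          rw [Real.norm_eq_abs, abs_div, abs_pow, abs_of_pos (hGpos n)]
        rw [h3]
        exact mul_le_mul_of_nonneg_left hs (by positivity)
      have h4 := norm_setIntegral_le_of_norm_le_const_ae (hvol t) h2
      calc ∫ s in Ioo a t, ‖(c ^ n / Real.Gamma (β * n + 1)) * ((t - s) ^ (β * (n:ℝ)) * f s)‖
          ≤ ‖∫ s in Ioo a t,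
              ‖(c ^ n / Real.Gamma (β * n + 1)) * ((t - s) ^ (β * (n:ℝ)) * f s)‖‖ :=
            le_abs_self _
        _ ≤ ((|c| ^ n / Real.Gamma (β * n + 1)) * ((b - a) ^ (β * (n:ℝ)) * B)) *
              (volume (Ioo a t)).toReal := h4
        _ ≤ (|c| ^ n / Real.Gamma (β * n + 1)) * (((b - a) ^ (β * (n:ℝ)) * B) * (b - a)) := by
            have h6 := mul_le_mul_of_nonneg_left (hvolle t ht)
              (show (0:ℝ) ≤ (|c| ^ n / Real.Gamma (β * ↑n + 1)) * ((b - a) ^ (β * (n:ℝ)) * B)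
                from by positivity)
            nlinarith [h6]
    have hHS := hasSum_integral_of_summable_integral_norm hint hsumnorm
    have hIeq : ∀ n : ℕ, (∫ s in Ioo a t,
        (c ^ n / Real.Gamma (β * n + 1)) * ((t - s) ^ (β * (n:ℝ)) * f s))
          = (c ^ n / Real.Gamma (β * n + 1)) * I n t := fun n => integral_const_mul _ _
    have hint2 : (∫ s in Ioo a t, ∑' n : ℕ,
        (c ^ n / Real.Gamma (β * n + 1)) * ((t - s) ^ (β * (n:ℝ)) * f s))
          = ∫ s in Ioo a t, powML p β 1 (-(α / (1 - α)) * (t - s) ^ β) * f s := by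
      refine setIntegral_congr_fun measurableSet_Ioo (fun s hs => ?_)
      have hts : (0:ℝ) ≤ t - s := by linarith [hs.2.le]
      rw [powML, ← tsum_mul_right]
      refine tsum_congr (fun n => ?_)
      have h5 : -(α / (1 - α)) * (t - s) ^ β * Real.log p = c * (t - s) ^ β := by
        rw [hc]; ring
      rw [h5, mul_pow c ((t - s) ^ β) n, hpow (t - s) hts n]
      ring
    simp only [hIeq] at hHS
    rwa [hint2] at hHS
  -- Part 1
  have part1 : ∀ t ∈ Icc a b, PFD a α β p Nf ω g t =
      (Nf α / (1 - α)) * ∑' n : ℕ, c ^ n * RLint a (β * n + 1) ω (fun x => f x / ω x) t := by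
    intro t ht
    have h1 : PFD a α β p Nf ω g t = (Nf α / (1 - α)) * ((1 / ω t) *
        ∫ s in Ioo a t, powML p β 1 (-(α / (1 - α)) * (t - s) ^ β) * f s) := by
      rw [PFD, intervalIntegral.integral_of_le ht.1, integral_Ioc_eq_integral_Ioo]
      ring
    rw [h1, ← (hseries t ht).tsum_eq, ← tsum_mul_left]
    congr 1
    refine tsum_congr (fun n => ?_)
    rw [hRL t ht n, one_div (Real.Gamma (β * ↑n + 1) * ω t), mul_inv]
    ring
  -- uniform bound on the terms
  set u : ℕ → ℝ := fun n => (Nf α / (1 - α)) *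
    ((|c| ^ n / Real.Gamma (β * n + 1)) * (((b - a) ^ (β * (n:ℝ)) * B) * ((b - a) / m))) with hu
  have husum : Summable u := (hmaj ((b - a) / m)).mul_left _
  have hterm : ∀ (n : ℕ) (t : ℝ), t ∈ Icc a b →
      ‖(Nf α / (1 - α)) * (c ^ n * RLint a (β * n + 1) ω (fun x => f x / ω x) t)‖ ≤ u n := by
    intro n t ht
    rw [hRL t ht n]
    have hωt : 0 < ω t := hωpos t ht
    have hfrac : |1 / (Real.Gamma (β * n + 1) * ω t)| ≤ 1 / (Real.Gamma (β * n + 1) * m) := by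
      rw [abs_of_pos (by positivity)]
      apply one_div_le_one_div_of_le (by positivity)
      exact mul_le_mul_of_nonneg_left (hmin ht) (hGpos n).le
    have hnorm : ‖(Nf α / (1 - α)) * (c ^ n *
        ((1 / (Real.Gamma (β * n + 1) * ω t)) * I n t))‖
          = (Nf α / (1 - α)) * (|c| ^ n *
            (|1 / (Real.Gamma (β * n + 1) * ω t)| * ‖I n t‖)) := by
      rw [norm_mul, norm_mul, norm_mul, Real.norm_eq_abs (c ^ n), abs_pow,
        Real.norm_eq_abs (1 / _), Real.norm_eq_abs (Nf α / (1 - α)),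
        abs_of_pos (by positivity : (0:ℝ) < Nf α / (1 - α))]
    rw [hnorm, hu]
    have hstep : |1 / (Real.Gamma (β * n + 1) * ω t)| * ‖I n t‖ ≤
        (1 / (Real.Gamma (β * n + 1) * m)) * (((b - a) ^ (β * (n:ℝ)) * B) * (b - a)) :=
      mul_le_mul hfrac (hIb t ht n) (norm_nonneg _) (by positivity)
    have hfinal : (1 / (Real.Gamma (β * n + 1) * m)) *
        (((b - a) ^ (β * (n:ℝ)) * B) * (b - a)) =
        (1 / Real.Gamma (β * n + 1)) * (((b - a) ^ (β * (n:ℝ)) * B) * ((b - a) / m)) := by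
      rw [one_div (Real.Gamma (β * ↑n + 1) * m), mul_inv]
      ring
    calc (Nf α / (1 - α)) * (|c| ^ n *
          (|1 / (Real.Gamma (β * n + 1) * ω t)| * ‖I n t‖))
        ≤ (Nf α / (1 - α)) * (|c| ^ n *
          ((1 / (Real.Gamma (β * n + 1) * m)) * (((b - a) ^ (β * (n:ℝ)) * B) * (b - a)))) := by
          apply mul_le_mul_of_nonneg_left _ (by positivity)
          exact mul_le_mul_of_nonneg_left hstep (by positivity)
      _ = (Nf α / (1 - α)) *
          ((|c| ^ n / Real.Gamma (β * n + 1)) * (((b - a) ^ (β * (n:ℝ)) * B) * ((b - a) / m))) := by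
          rw [hfinal]; ring
  -- conclusion
  refine ⟨part1, ?_⟩
  have hTU := tendstoUniformlyOn_tsum_nat husum
    (f := fun n t => (Nf α / (1 - α)) * (c ^ n * RLint a (β * n + 1) ω (fun x => f x / ω x) t))
    (s := Icc a b) hterm
  have hTU2 := hTU.congr_right (fun t ht => by
    beta_reduce
    rw [tsum_mul_left, ← part1 t ht])
  have hTU3 : TendstoUniformlyOn
      (fun (N : ℕ) (t : ℝ) => (Nf α / (1 - α)) * ∑ n ∈ Finset.range N,
        c ^ n * RLint a (β * n + 1) ω (fun x => f x / ω x) t)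
      (fun t => PFD a α β p Nf ω g t) atTop (Icc a b) := by
    refine hTU2.congr ?_
    filter_upwards with N
    intro t ht
    simp only [Finset.mul_sum]
  exact hTU3.tendstoLocallyUniformlyOn
end

section
/- For \(\beta>0\), step \(h>0\), nodes \(t_j=a+jh\) and \(1\le k\le n\), the moment integral satisfies \(\int_{t_k}^{t_{k+1}} (t_{n+1}-s)^{\beta-1}(s-t_{k-1})\,ds = \frac{h^{\beta+1}}{\beta(\beta+1)}\big[(n-k+1)^{\beta}(n-k+2+\beta) - (n-k)^{\beta}(n-k+2+2\beta)\big]\). -/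
open Real

lemma moment_aux (β T c x y : ℝ) (hβ : 0 < β) (hxy : x ≤ y) (hyT : y ≤ T) :
    (∫ s in x..y, (T - s) ^ (β - 1) * (s - c))
      = (-( (T - y) ^ β * (y - c)) / β - (T - y) ^ (β + 1) / (β * (β + 1)))
      - (-( (T - x) ^ β * (x - c)) / β - (T - x) ^ (β + 1) / (β * (β + 1))) := by
  set F : ℝ → ℝ := fun s => -((T - s) ^ β * (s - c)) / β - (T - s) ^ (β + 1) / (β * (β + 1))
    with hF
  have hβ0 : β ≠ 0 := ne_of_gt hβ
  have hβ1 : β + 1 ≠ 0 := by positivity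
  have hcont : ContinuousOn F (Set.Icc x y) := by
    apply ContinuousOn.sub
    · apply ContinuousOn.div_const
      apply ContinuousOn.neg
      apply ContinuousOn.mul _ (by fun_prop)
      intro s _
      exact ((Real.continuousAt_rpow_const _ _ (Or.inr hβ.le)).comp
        (by fun_prop : ContinuousAt (fun s : ℝ => T - s) s)).continuousWithinAt
    · apply ContinuousOn.div_const
      intro s _
      exact ((Real.continuousAt_rpow_const _ _ (Or.inr (by positivity : (0:ℝ) ≤ β + 1))).comp
        (by fun_prop : ContinuousAt (fun s : ℝ => T - s) s)).continuousWithinAt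
  have hderiv : ∀ s ∈ Set.Ioo x y, HasDerivAt F ((T - s) ^ (β - 1) * (s - c)) s := by
    intro s hs
    have hTs : 0 < T - s := by linarith [hs.2]
    have h1 : HasDerivAt (fun s : ℝ => T - s) (-1) s := by
      simpa using (hasDerivAt_id s).const_sub T
    have h2 : HasDerivAt (fun s : ℝ => (T - s) ^ β) (β * (T - s) ^ (β - 1) * (-1)) s :=
      (Real.hasDerivAt_rpow_const (Or.inl (ne_of_gt hTs))).comp s h1
    have h3 : HasDerivAt (fun s : ℝ => (T - s) ^ (β + 1))
        ((β + 1) * (T - s) ^ (β + 1 - 1) * (-1)) s :=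
      (Real.hasDerivAt_rpow_const (Or.inl (ne_of_gt hTs))).comp s h1
    have h4 := (((h2.mul ((hasDerivAt_id s).sub_const c)).neg.div_const β).sub
      (h3.div_const (β * (β + 1))))
    refine h4.congr_deriv ?_
    symm
    have hsplit : (T - s) ^ β = (T - s) ^ (β - 1) * (T - s) := by
      rw [← Real.rpow_add_one (ne_of_gt hTs)]; ring_nf
    rw [show β + 1 - 1 = β from by ring, hsplit]
    simp only [id_eq]
    field_simp
    ring
  have hint : IntervalIntegrable (fun s => (T - s) ^ (β - 1) * (s - c)) MeasureTheory.volume x y := by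
    have h1 : IntervalIntegrable (fun u : ℝ => u ^ (β - 1)) MeasureTheory.volume (T - x) (T - y) :=
      intervalIntegral.intervalIntegrable_rpow' (by linarith)
    have h2 := h1.comp_sub_left T
    simp only [sub_sub_cancel] at h2
    exact h2.mul_continuousOn (by fun_prop)
  exact intervalIntegral.integral_eq_sub_of_hasDerivAt_of_le hxy hcont hderiv hint

/-- closed form of the moment integral
`∫_{t_k}^{t_{k+1}} (t_{n+1}-s)^{β-1} (s - t_{k-1}) ds` for uniform nodes `t_j = a + j h`. -/
theorem moment_integral_two (a h β : ℝ) (hh : 0 < h) (hβ : 0 < β)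
    (n k : ℕ) (hk1 : 1 ≤ k) (hkn : k ≤ n) :
    (∫ s in (a + k * h)..(a + (k + 1 : ℕ) * h),
        (a + (n + 1 : ℕ) * h - s) ^ (β - 1) * (s - (a + ((k : ℝ) - 1) * h)))
      = h ^ (β + 1) / (β * (β + 1)) *
          (((n : ℝ) - k + 1) ^ β * ((n : ℝ) - k + 2 + β)
            - ((n : ℝ) - k) ^ β * ((n : ℝ) - k + 2 + 2 * β)) := by
  have hkn' : (k : ℝ) ≤ (n : ℝ) := by exact_mod_cast hkn
  set m : ℝ := (n : ℝ) - k with hm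
  have hm0 : 0 ≤ m := by simp [hm]; linarith
  have key := moment_aux β (a + (n + 1 : ℕ) * h) (a + ((k : ℝ) - 1) * h)
      (a + k * h) (a + (k + 1 : ℕ) * h) hβ
      (by push_cast; nlinarith) (by push_cast; nlinarith)
  rw [key]
  have e1 : a + ((n:ℕ) + 1 : ℕ) * h - (a + ((k:ℕ) + 1 : ℕ) * h) = m * h := by
    push_cast; simp [hm]; ring
  have e2 : a + ((n:ℕ) + 1 : ℕ) * h - (a + (k:ℝ) * h) = (m + 1) * h := by
    push_cast; simp [hm]; ring
  have e3 : a + ((k:ℕ) + 1 : ℕ) * h - (a + ((k : ℝ) - 1) * h) = 2 * h := by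
    push_cast; ring
  have e4 : a + (k:ℝ) * h - (a + ((k : ℝ) - 1) * h) = h := by ring
  rw [e1, e2, e3, e4]
  have hβ0 : β ≠ 0 := ne_of_gt hβ
  have hβ1 : β + 1 ≠ 0 := by positivity
  have hmul1 : (m * h) ^ β = m ^ β * h ^ β := Real.mul_rpow hm0 hh.le
  have hmul1' : (m * h) ^ (β + 1) = m ^ (β + 1) * h ^ (β + 1) := Real.mul_rpow hm0 hh.le
  have hmul2 : ((m + 1) * h) ^ β = (m + 1) ^ β * h ^ β := Real.mul_rpow (by linarith) hh.le
  have hmul2' : ((m + 1) * h) ^ (β + 1) = (m + 1) ^ (β + 1) * h ^ (β + 1) :=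
    Real.mul_rpow (by linarith) hh.le
  have hsm : m ^ (β + 1) = m ^ β * m := by
    rw [Real.rpow_add' hm0 hβ1, Real.rpow_one]
  have hsm1 : (m + 1) ^ (β + 1) = (m + 1) ^ β * (m + 1) := by
    rw [Real.rpow_add' (by linarith) hβ1, Real.rpow_one]
  have hsh : h ^ (β + 1) = h ^ β * h := by
    rw [Real.rpow_add' hh.le hβ1, Real.rpow_one]
  rw [hmul1, hmul1', hmul2, hmul2', hsm, hsm1, hsh]
  field_simp
  ring
end
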